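/- Let x, x' be distinct nonsingular vectors of V(2n,2) with Q(x + x') = 1, and set K = span{x, x'}^⊥ ⊓ Π and L = span{x, x'}^⊥ ⊓ Σ. Then K^⊥ ⊓ L = 0; consequently the line M = K^⊥ ⊓ Σ is a complement of L in Σ. -/
import Mathlib


/-- The hyperbolic quadratic form on `V(2n,2)`:
`Q x = ∑_{i=0}^{n-1} x (2i) * x (2i+1)`. -/
def Q (n : ℕ) (x : Fin (2*n) → ZMod 2) : ZMod 2 :=
  ∑ i : Fin n, x ⟨2*i.1, by have := i.2; omega⟩ * x ⟨2*i.1+1, by have := i.2; omega⟩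

/-- The bilinear form associated with `Q`: `B u v = Q (u+v) + Q u + Q v`. -/
def B (n : ℕ) (u v : Fin (2*n) → ZMod 2) : ZMod 2 :=
  Q n (u + v) + Q n u + Q n v

lemma B_eq (n : ℕ) (u v : Fin (2*n) → ZMod 2) :
    B n u v = ∑ i : Fin n,
      (u ⟨2*i.1, by have := i.2; omega⟩ * v ⟨2*i.1+1, by have := i.2; omega⟩
        + u ⟨2*i.1+1, by have := i.2; omega⟩ * v ⟨2*i.1, by have := i.2; omega⟩) := by
  have key : ∀ a b c d : ZMod 2, (a+c)*(b+d) + a*b + c*d = a*d + c*b := by decide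
  simp only [B, Q, Pi.add_apply, ← Finset.sum_add_distrib]
  exact Finset.sum_congr rfl fun i _ => by rw [key]; ring

lemma B_add_left (n : ℕ) (u v w : Fin (2*n) → ZMod 2) :
    B n (u + v) w = B n u w + B n v w := by
  simp only [B_eq, Pi.add_apply, ← Finset.sum_add_distrib]
  exact Finset.sum_congr rfl fun i _ => by ring

lemma B_smul_left (n : ℕ) (c : ZMod 2) (v w : Fin (2*n) → ZMod 2) :
    B n (c • v) w = c * B n v w := by
  simp only [B_eq, Pi.smul_apply, smul_eq_mul, Finset.mul_sum]
  exact Finset.sum_congr rfl fun i _ => by ring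

/-- The perp `S^⊥ = {v : B v s = 0 for all s ∈ S}` of a subspace `S`
with respect to the bilinear form `B`. -/
def perp (n : ℕ) (S : Submodule (ZMod 2) (Fin (2*n) → ZMod 2)) :
    Submodule (ZMod 2) (Fin (2*n) → ZMod 2) where
  carrier := {v | ∀ s ∈ S, B n v s = 0}
  zero_mem' := by intro s _; simp [B_eq]
  add_mem' := by
    intro a b ha hb s hs
    rw [B_add_left, ha s hs, hb s hs, add_zero]
  smul_mem' := by
    intro c v hv s hs
    rw [B_smul_left, hv s hs, mul_zero]

/-- `Π`, the span of the even-indexed standard basis vectors `e_{2i}`,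
a maximal totally singular subspace. -/
def PiSub (n : ℕ) : Submodule (ZMod 2) (Fin (2*n) → ZMod 2) :=
  Submodule.span (ZMod 2) {v | ∃ j : Fin (2*n), j.1 % 2 = 0 ∧ v = Pi.single j 1}

/-- `Σ`, the span of the odd-indexed standard basis vectors `e_{2i+1}`,
a maximal totally singular subspace disjoint from `Π`. -/
def SigmaSub (n : ℕ) : Submodule (ZMod 2) (Fin (2*n) → ZMod 2) :=
  Submodule.span (ZMod 2) {v | ∃ j : Fin (2*n), j.1 % 2 = 1 ∧ v = Pi.single j 1}

-- auxiliary lemmas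


lemma B_symm (n : ℕ) (u v : Fin (2*n) → ZMod 2) : B n u v = B n v u := by
  simp only [B_eq]
  exact Finset.sum_congr rfl fun i _ => by ring

lemma B_add_right (n : ℕ) (u v w : Fin (2*n) → ZMod 2) :
    B n u (v + w) = B n u v + B n u w := by
  rw [B_symm, B_add_left, B_symm n v u, B_symm n w u]

lemma B_smul_right (n : ℕ) (c : ZMod 2) (u v : Fin (2*n) → ZMod 2) :
    B n u (c • v) = c * B n u v := by
  rw [B_symm, B_smul_left, B_symm]

lemma B_self (n : ℕ) (v : Fin (2*n) → ZMod 2) : B n v v = 0 := by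
  simp only [B_eq]
  exact Finset.sum_eq_zero fun i _ =>
    (by decide : ∀ a b : ZMod 2, a*b + b*a = 0) _ _

lemma B_zero_left (n : ℕ) (v : Fin (2*n) → ZMod 2) : B n 0 v = 0 := by
  simp [B_eq]

lemma mem_SigmaSub (n : ℕ) (v : Fin (2*n) → ZMod 2) :
    v ∈ SigmaSub n ↔ ∀ j : Fin (2*n), j.1 % 2 = 0 → v j = 0 := by
  constructor
  · intro hv
    refine Submodule.span_induction ?_ ?_ ?_ ?_ hv
    · rintro _ ⟨j, hj, rfl⟩ j' hj'
      exact Pi.single_eq_of_ne (by rintro rfl; omega) 1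
    · intro j _; rfl
    · intro u v _ _ hu hv j hj
      simp [Pi.add_apply, hu j hj, hv j hj]
    · intro c u _ hu j hj
      simp [hu j hj]
  · intro hv
    rw [show v = ∑ j : Fin (2*n), Pi.single j (v j) from (Finset.univ_sum_single v).symm]
    refine Submodule.sum_mem _ fun j _ => ?_
    rcases Nat.mod_two_eq_zero_or_one j.1 with h | h
    · rw [hv j h]; simp
    · have hs : Pi.single j (v j) = v j • (Pi.single j 1 : Fin (2*n) → ZMod 2) := by
        rw [← Pi.single_smul, smul_eq_mul, mul_one]
      rw [hs]
      exact Submodule.smul_mem _ _ (Submodule.subset_span ⟨j, h, rfl⟩)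

lemma mem_PiSub (n : ℕ) (v : Fin (2*n) → ZMod 2) :
    v ∈ PiSub n ↔ ∀ j : Fin (2*n), j.1 % 2 = 1 → v j = 0 := by
  constructor
  · intro hv
    refine Submodule.span_induction ?_ ?_ ?_ ?_ hv
    · rintro _ ⟨j, hj, rfl⟩ j' hj'
      exact Pi.single_eq_of_ne (by rintro rfl; omega) 1
    · intro j _; rfl
    · intro u v _ _ hu hv j hj
      simp [Pi.add_apply, hu j hj, hv j hj]
    · intro c u _ hu j hj
      simp [hu j hj]
  · intro hv
    rw [show v = ∑ j : Fin (2*n), Pi.single j (v j) from (Finset.univ_sum_single v).symm]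
    refine Submodule.sum_mem _ fun j _ => ?_
    rcases Nat.mod_two_eq_zero_or_one j.1 with h | h
    · have hs : Pi.single j (v j) = v j • (Pi.single j 1 : Fin (2*n) → ZMod 2) := by
        rw [← Pi.single_smul, smul_eq_mul, mul_one]
      rw [hs]
      exact Submodule.smul_mem _ _ (Submodule.subset_span ⟨j, h, rfl⟩)
    · rw [hv j h]; simp

lemma B_even_even (n : ℕ) {u v : Fin (2*n) → ZMod 2}
    (hu : ∀ j : Fin (2*n), j.1 % 2 = 1 → u j = 0)
    (hv : ∀ j : Fin (2*n), j.1 % 2 = 1 → v j = 0) : B n u v = 0 := by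
  rw [B_eq]
  refine Finset.sum_eq_zero fun i _ => ?_
  rw [hu ⟨2*i.1+1, by have := i.2; omega⟩ (by show (2*i.1+1) % 2 = 1; omega),
      hv ⟨2*i.1+1, by have := i.2; omega⟩ (by show (2*i.1+1) % 2 = 1; omega)]
  ring

lemma B_odd_odd (n : ℕ) {u v : Fin (2*n) → ZMod 2}
    (hu : ∀ j : Fin (2*n), j.1 % 2 = 0 → u j = 0)
    (hv : ∀ j : Fin (2*n), j.1 % 2 = 0 → v j = 0) : B n u v = 0 := by
  rw [B_eq]
  refine Finset.sum_eq_zero fun i _ => ?_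
  rw [hu ⟨2*i.1, by have := i.2; omega⟩ (by show (2*i.1) % 2 = 0; omega),
      hv ⟨2*i.1, by have := i.2; omega⟩ (by show (2*i.1) % 2 = 0; omega)]
  ring

lemma mem_perp_span_pair (n : ℕ) (x x' v : Fin (2*n) → ZMod 2) :
    v ∈ perp n (Submodule.span (ZMod 2) {x, x'}) ↔ B n v x = 0 ∧ B n v x' = 0 := by
  constructor
  · intro h
    exact ⟨h x (Submodule.subset_span (by simp)),
           h x' (Submodule.subset_span (by simp))⟩
  · rintro ⟨h1, h2⟩ s hs
    obtain ⟨c, d, rfl⟩ := Submodule.mem_span_pair.mp hs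
    rw [B_add_right, B_smul_right, B_smul_right, h1, h2]; ring

lemma B_single_even (n : ℕ) (u : Fin (2*n) → ZMod 2) (i : Fin n) :
    B n u (Pi.single (⟨2*i.1, by have := i.2; omega⟩ : Fin (2*n)) (1 : ZMod 2))
      = u ⟨2*i.1+1, by have := i.2; omega⟩ := by
  rw [B_eq, Finset.sum_eq_single i]
  · simp [Pi.single_apply, Fin.mk.injEq]
  · intro i' _ hne
    have h1 : i'.1 ≠ i.1 := fun h => hne (Fin.ext h)
    have e1 : 2*i'.1+1 ≠ 2*i.1 := by omega
    have e2 : 2*i'.1 ≠ 2*i.1 := by omega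
    simp [Pi.single_apply, Fin.mk.injEq, e1, e2]
  · intro h; exact absurd (Finset.mem_univ i) h

def evenPart (n : ℕ) (x : Fin (2*n) → ZMod 2) : Fin (2*n) → ZMod 2 :=
  fun j => if j.1 % 2 = 0 then x j else 0

def oddPart (n : ℕ) (x : Fin (2*n) → ZMod 2) : Fin (2*n) → ZMod 2 :=
  fun j => if j.1 % 2 = 0 then 0 else x j

lemma evenPart_add_oddPart (n : ℕ) (x : Fin (2*n) → ZMod 2) :
    evenPart n x + oddPart n x = x := by
  funext j
  simp only [Pi.add_apply, evenPart, oddPart]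
  split_ifs <;> simp

lemma evenPart_odd (n : ℕ) (x : Fin (2*n) → ZMod 2) (j : Fin (2*n)) (hj : j.1 % 2 = 1) :
    evenPart n x j = 0 := if_neg (by omega)

lemma oddPart_even (n : ℕ) (x : Fin (2*n) → ZMod 2) (j : Fin (2*n)) (hj : j.1 % 2 = 0) :
    oddPart n x j = 0 := if_pos hj

lemma B_evenPart (n : ℕ) (x : Fin (2*n) → ZMod 2) :
    B n (evenPart n x) x = Q n x := by
  rw [B_eq]
  simp only [Q]
  refine Finset.sum_congr rfl fun i _ => ?_
  rw [show evenPart n x ⟨2*i.1, by have := i.2; omega⟩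
        = x ⟨2*i.1, by have := i.2; omega⟩ from if_pos (by show (2*i.1) % 2 = 0; omega),
      evenPart_odd n x ⟨2*i.1+1, by have := i.2; omega⟩ (by show (2*i.1+1) % 2 = 1; omega)]
  ring

lemma B_decomp_left (n : ℕ) (x v : Fin (2*n) → ZMod 2) :
    B n x v = B n (evenPart n x) v + B n (oddPart n x) v := by
  conv_lhs => rw [← evenPart_add_oddPart n x]
  rw [B_add_left]

lemma B_decomp_right (n : ℕ) (u x : Fin (2*n) → ZMod 2) :
    B n u x = B n u (evenPart n x) + B n u (oddPart n x) := by
  conv_lhs => rw [← evenPart_add_oddPart n x]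
  rw [B_add_right]

lemma zmod2_rearr : ∀ p q r : ZMod 2, p = q + r → r = p + q := by decide
lemma zmod2_rearr' : ∀ p q r : ZMod 2, p = q + r → q = p + r := by decide

lemma mem_perp (n : ℕ) (S : Submodule (ZMod 2) (Fin (2*n) → ZMod 2))
    (v : Fin (2*n) → ZMod 2) : v ∈ perp n S ↔ ∀ s ∈ S, B n v s = 0 := Iff.rfl

lemma keyzero (n : ℕ) (x x' : Fin (2*n) → ZMod 2)
    (hBx : B n (evenPart n x) x = 1) (hBx' : B n (evenPart n x') x' = 1)
    (hab : B n (evenPart n x) x' + B n (evenPart n x') x = 1)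
    (w : Fin (2*n) → ZMod 2)
    (hwS : ∀ j : Fin (2*n), j.1 % 2 = 0 → w j = 0)
    (hwK : ∀ k : Fin (2*n) → ZMod 2,
      k ∈ perp n (Submodule.span (ZMod 2) {x, x'}) → k ∈ PiSub n → B n w k = 0)
    (hw1 : B n w (evenPart n x) = 0) (hw2 : B n w (evenPart n x') = 0) :
    w = 0 := by
  set a := B n (evenPart n x) x' with ha
  set b := B n (evenPart n x') x with hb
  have hab0 : a * b = 0 :=
    (by decide : ∀ a b : ZMod 2, a + b = 1 → a*b = 0) a b hab
  funext j
  show w j = 0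
  rcases Nat.mod_two_eq_zero_or_one j.1 with h | h
  · exact hwS j h
  · have hi : j.1 / 2 < n := by have := j.2; omega
    set i : Fin n := ⟨j.1 / 2, hi⟩ with hidef
    have hj : j = ⟨2*i.1+1, by have := i.2; omega⟩ :=
      Fin.ext (by show j.1 = 2*(j.1/2)+1; omega)
    set e : Fin (2*n) → ZMod 2 :=
      Pi.single (⟨2*i.1, by have := i.2; omega⟩ : Fin (2*n)) 1 with he
    set c : ZMod 2 := x ⟨2*i.1+1, by have := i.2; omega⟩
        + b * x' ⟨2*i.1+1, by have := i.2; omega⟩ with hc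
    set c' : ZMod 2 := a * x ⟨2*i.1+1, by have := i.2; omega⟩
        + x' ⟨2*i.1+1, by have := i.2; omega⟩ with hc'
    set k : Fin (2*n) → ZMod 2 := e + c • evenPart n x + c' • evenPart n x' with hk
    have hkPi : k ∈ PiSub n := by
      rw [mem_PiSub]
      intro j' hj'
      have hne : j' ≠ (⟨2*i.1, by have := i.2; omega⟩ : Fin (2*n)) := by
        intro hEq
        have : j'.1 = 2*i.1 := congrArg Fin.val hEq
        omega
      rw [hk]
      simp [he, Pi.single_eq_of_ne hne, evenPart_odd n x j' hj',
        evenPart_odd n x' j' hj']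
    have hBex : B n e x = x ⟨2*i.1+1, by have := i.2; omega⟩ := by
      rw [B_symm, he]; exact B_single_even n x i
    have hBex' : B n e x' = x' ⟨2*i.1+1, by have := i.2; omega⟩ := by
      rw [B_symm, he]; exact B_single_even n x' i
    have hkW : k ∈ perp n (Submodule.span (ZMod 2) {x, x'}) := by
      rw [mem_perp_span_pair]
      constructor
      · rw [hk, B_add_left, B_add_left, B_smul_left, B_smul_left, hBex, hBx, ← hb,
          hc, hc']
        exact (by decide : ∀ p q a b : ZMod 2, a*b = 0 →
          p + (p + b*q) * 1 + (a*p + q) * b = 0) _ _ a b hab0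
      · rw [hk, B_add_left, B_add_left, B_smul_left, B_smul_left, hBex', hBx', ← ha,
          hc, hc']
        exact (by decide : ∀ p q a b : ZMod 2, a*b = 0 →
          q + (p + b*q) * a + (a*p + q) * 1 = 0) _ _ a b hab0
    have hwk := hwK k hkW hkPi
    have hwe : B n w k = w ⟨2*i.1+1, by have := i.2; omega⟩ := by
      rw [hk, B_add_right, B_add_right, B_smul_right, B_smul_right, hw1, hw2,
        he, B_single_even n w i]
      ring
    rw [hj, ← hwe]
    exact hwk


/-- For distinct nonsingular vectors `x, x'` with `Q (x + x') = 1`, setting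
`K = span{x,x'}^⊥ ⊓ Π` and `L = span{x,x'}^⊥ ⊓ Σ`, we have `K^⊥ ⊓ L = 0`;
consequently the line `M = K^⊥ ⊓ Σ` is a complement of `L` in `Σ`. -/
theorem M_complement_of_L (n : ℕ) (hn : 2 ≤ n) (x x' : Fin (2*n) → ZMod 2)
    (hxx' : x ≠ x') (hx : Q n x = 1) (hx' : Q n x' = 1) (hsum : Q n (x + x') = 1) :
    perp n (perp n (Submodule.span (ZMod 2) {x, x'}) ⊓ PiSub n) ⊓
        (perp n (Submodule.span (ZMod 2) {x, x'}) ⊓ SigmaSub n) = ⊥ ∧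
    Module.finrank (ZMod 2)
        (perp n (perp n (Submodule.span (ZMod 2) {x, x'}) ⊓ PiSub n) ⊓ SigmaSub n :
          Submodule (ZMod 2) (Fin (2*n) → ZMod 2)) = 2 ∧
    (perp n (perp n (Submodule.span (ZMod 2) {x, x'}) ⊓ PiSub n) ⊓ SigmaSub n) ⊓
        (perp n (Submodule.span (ZMod 2) {x, x'}) ⊓ SigmaSub n) = ⊥ ∧
    (perp n (perp n (Submodule.span (ZMod 2) {x, x'}) ⊓ PiSub n) ⊓ SigmaSub n) ⊔
        (perp n (Submodule.span (ZMod 2) {x, x'}) ⊓ SigmaSub n) = SigmaSub n := by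
  classical
  have hBxx' : B n x x' = 1 := by
    show Q n (x + x') + Q n x + Q n x' = 1
    rw [hsum, hx, hx']; decide
  have hBx : B n (evenPart n x) x = 1 := by rw [B_evenPart, hx]
  have hBx' : B n (evenPart n x') x' = 1 := by rw [B_evenPart, hx']
  set a := B n (evenPart n x) x' with ha
  set b := B n (evenPart n x') x with hb
  have hee : ∀ y y' : Fin (2*n) → ZMod 2,
      B n (evenPart n y) (evenPart n y') = 0 :=
    fun y y' => B_even_even n (evenPart_odd n y) (evenPart_odd n y')
  have hoo : ∀ y y' : Fin (2*n) → ZMod 2,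
      B n (oddPart n y) (oddPart n y') = 0 :=
    fun y y' => B_odd_odd n (oddPart_even n y) (oddPart_even n y')
  have hoPeP : ∀ y y' : Fin (2*n) → ZMod 2,
      B n (oddPart n y) (evenPart n y') = B n (evenPart n y') y := by
    intro y y'
    have h := B_decomp_left n y (evenPart n y')
    rw [hee y y', zero_add] at h
    rw [← h, B_symm]
  have hab : a + b = 1 := by
    have h1 := B_decomp_left n x x'
    have h2 := B_decomp_right n (oddPart n x) x'
    rw [hoo x x', add_zero, hoPeP x x'] at h2
    rw [h2, hBxx'] at h1
    exact h1.symm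
  have hab0 : a * b = 0 :=
    (by decide : ∀ a b : ZMod 2, a + b = 1 → a*b = 0) a b hab
  have hv11 : B n (oddPart n x) (evenPart n x) = 1 := (hoPeP x x).trans hBx
  have hv21 : B n (oddPart n x') (evenPart n x) = a := (hoPeP x' x).trans ha.symm
  have hv12 : B n (oddPart n x) (evenPart n x') = b := (hoPeP x x').trans hb.symm
  have hv22 : B n (oddPart n x') (evenPart n x') = 1 := (hoPeP x' x').trans hBx'
  have hwdec : ∀ y v : Fin (2*n) → ZMod 2,
      B n (oddPart n y) v = B n y v + B n (evenPart n y) v :=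
    fun y v => zmod2_rearr _ _ _ (B_decomp_left n y v)
  have hs11 : B n (oddPart n x) x = 1 := by
    rw [hwdec, B_self, zero_add, hBx]
  have hs12 : B n (oddPart n x) x' = 1 + a := by
    rw [hwdec, hBxx', ha]
  have hs21 : B n (oddPart n x') x = 1 + b := by
    rw [hwdec, B_symm n x' x, hBxx', hb]
  have hs22 : B n (oddPart n x') x' = 1 := by
    rw [hwdec, B_self, zero_add, hBx']
  have hxSS : oddPart n x ∈ SigmaSub n := (mem_SigmaSub n _).mpr (oddPart_even n x)
  have hx'SS : oddPart n x' ∈ SigmaSub n := (mem_SigmaSub n _).mpr (oddPart_even n x')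
  have hxSK : oddPart n x ∈
      perp n (perp n (Submodule.span (ZMod 2) {x, x'}) ⊓ PiSub n) := by
    rw [mem_perp]
    intro k hk
    obtain ⟨hkW, hkPi⟩ := Submodule.mem_inf.mp hk
    obtain ⟨hk1, hk2⟩ := (mem_perp_span_pair n x x' k).mp hkW
    rw [hwdec x k, B_symm n x k, hk1,
      B_even_even n (evenPart_odd n x) ((mem_PiSub n k).mp hkPi)]
    decide
  have hx'SK : oddPart n x' ∈
      perp n (perp n (Submodule.span (ZMod 2) {x, x'}) ⊓ PiSub n) := by
    rw [mem_perp]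
    intro k hk
    obtain ⟨hkW, hkPi⟩ := Submodule.mem_inf.mp hk
    obtain ⟨hk1, hk2⟩ := (mem_perp_span_pair n x x' k).mp hkW
    rw [hwdec x' k, B_symm n x' k, hk2,
      B_even_even n (evenPart_odd n x') ((mem_PiSub n k).mp hkPi)]
    decide
  have hzero : ∀ v : Fin (2*n) → ZMod 2,
      v ∈ perp n (perp n (Submodule.span (ZMod 2) {x, x'}) ⊓ PiSub n) →
      v ∈ perp n (Submodule.span (ZMod 2) {x, x'}) → v ∈ SigmaSub n → v = 0 := by
    intro v hv1 hv2 hv3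
    have hv3' := (mem_SigmaSub n v).mp hv3
    obtain ⟨hvx, hvx'⟩ := (mem_perp_span_pair n x x' v).mp hv2
    have hve : B n v (evenPart n x) = 0 := by
      have h := B_decomp_right n v x
      rw [hvx, B_odd_odd n hv3' (oddPart_even n x), add_zero] at h
      exact h.symm
    have hve' : B n v (evenPart n x') = 0 := by
      have h := B_decomp_right n v x'
      rw [hvx', B_odd_odd n hv3' (oddPart_even n x'), add_zero] at h
      exact h.symm
    refine keyzero n x x' hBx hBx' hab v hv3' ?_ hve hve'
    intro k hkW hkPi
    exact hv1 k (Submodule.mem_inf.mpr ⟨hkW, hkPi⟩)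
  have conj1 : perp n (perp n (Submodule.span (ZMod 2) {x, x'}) ⊓ PiSub n) ⊓
      (perp n (Submodule.span (ZMod 2) {x, x'}) ⊓ SigmaSub n) = ⊥ := by
    rw [eq_bot_iff]
    intro v hv
    obtain ⟨hv1, hv23⟩ := Submodule.mem_inf.mp hv
    obtain ⟨hv2, hv3⟩ := Submodule.mem_inf.mp hv23
    exact (Submodule.mem_bot _).mpr (hzero v hv1 hv2 hv3)
  have hMle : ∀ w : Fin (2*n) → ZMod 2,
      w ∈ perp n (perp n (Submodule.span (ZMod 2) {x, x'}) ⊓ PiSub n) →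
      w ∈ SigmaSub n →
      ∃ α β : ZMod 2, α • oddPart n x + β • oddPart n x' = w := by
    intro w hw1 hw2
    have hw2' := (mem_SigmaSub n w).mp hw2
    set p := B n w (evenPart n x) with hp
    set q := B n w (evenPart n x') with hq
    refine ⟨p + a*q, b*p + q, ?_⟩
    set α := p + a*q with hα
    set β := b*p + q with hβ
    set u : Fin (2*n) → ZMod 2 := w + α • oddPart n x + β • oddPart n x' with hu
    have hu0 : u = 0 := by
      refine keyzero n x x' hBx hBx' hab u ?_ ?_ ?_ ?_
      · intro j hj
        rw [hu]
        simp [oddPart_even n x j hj, oddPart_even n x' j hj, hw2' j hj]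
      · intro k hkW hkPi
        have h1 := hw1 k (Submodule.mem_inf.mpr ⟨hkW, hkPi⟩)
        have h2 := hxSK k (Submodule.mem_inf.mpr ⟨hkW, hkPi⟩)
        have h3 := hx'SK k (Submodule.mem_inf.mpr ⟨hkW, hkPi⟩)
        rw [hu, B_add_left, B_add_left, B_smul_left, B_smul_left, h1, h2, h3]
        ring
      · rw [hu, B_add_left, B_add_left, B_smul_left, B_smul_left, hv11, hv21,
          ← hp, hα, hβ]
        exact (by decide : ∀ p q a b : ZMod 2, a*b = 0 →
          p + (p + a*q) * 1 + (b*p + q) * a = 0) p q a b hab0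
      · rw [hu, B_add_left, B_add_left, B_smul_left, B_smul_left, hv12, hv22,
          ← hq, hα, hβ]
        exact (by decide : ∀ p q a b : ZMod 2, a*b = 0 →
          q + (p + a*q) * b + (b*p + q) * 1 = 0) p q a b hab0
    funext j
    have hj := congrFun hu0 j
    rw [hu] at hj
    simp only [Pi.add_apply, Pi.smul_apply, smul_eq_mul, Pi.zero_apply] at hj
    simp only [Pi.add_apply, Pi.smul_apply, smul_eq_mul]
    exact (by decide : ∀ s t r : ZMod 2, s + t + r = 0 → t + r = s) _ _ _ hj
  have hMeq : perp n (perp n (Submodule.span (ZMod 2) {x, x'}) ⊓ PiSub n) ⊓ SigmaSub n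
      = Submodule.span (ZMod 2) {oddPart n x, oddPart n x'} := by
    apply le_antisymm
    · intro w hw
      obtain ⟨hw1, hw2⟩ := Submodule.mem_inf.mp hw
      obtain ⟨α, β, hαβ⟩ := hMle w hw1 hw2
      exact Submodule.mem_span_pair.mpr ⟨α, β, hαβ⟩
    · rw [Submodule.span_le]
      rintro v hv
      simp only [Set.mem_insert_iff, Set.mem_singleton_iff] at hv
      rcases hv with rfl | rfl
      · exact Submodule.mem_inf.mpr ⟨hxSK, hxSS⟩
      · exact Submodule.mem_inf.mpr ⟨hx'SK, hx'SS⟩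
  have hli : LinearIndependent (ZMod 2) ![oddPart n x, oddPart n x'] := by
    rw [LinearIndependent.pair_iff]
    intro s t hst
    have e1 : B n (s • oddPart n x + t • oddPart n x') (evenPart n x) = 0 := by
      rw [hst, B_zero_left]
    have e2 : B n (s • oddPart n x + t • oddPart n x') (evenPart n x') = 0 := by
      rw [hst, B_zero_left]
    rw [B_add_left, B_smul_left, B_smul_left, hv11, hv21] at e1
    rw [B_add_left, B_smul_left, B_smul_left, hv12, hv22] at e2
    exact (by decide : ∀ s t a b : ZMod 2, a*b = 0 → s*1 + t*a = 0 →
      s*b + t*1 = 0 → s = 0 ∧ t = 0) s t a b hab0 e1 e2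
  have hrange : ({oddPart n x, oddPart n x'} : Set (Fin (2*n) → ZMod 2))
      = Set.range ![oddPart n x, oddPart n x'] := by
    simp only [Matrix.range_cons, Matrix.range_empty, Set.union_empty,
      Set.union_singleton]
    exact Set.pair_comm _ _
  have conj2 : Module.finrank (ZMod 2)
      (perp n (perp n (Submodule.span (ZMod 2) {x, x'}) ⊓ PiSub n) ⊓ SigmaSub n :
        Submodule (ZMod 2) (Fin (2*n) → ZMod 2)) = 2 := by
    rw [hMeq, hrange]
    simpa using finrank_span_eq_card hli
  have conj3 : (perp n (perp n (Submodule.span (ZMod 2) {x, x'}) ⊓ PiSub n) ⊓ SigmaSub n) ⊓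
      (perp n (Submodule.span (ZMod 2) {x, x'}) ⊓ SigmaSub n) = ⊥ := by
    rw [eq_bot_iff]
    intro v hv
    obtain ⟨hvM, hvL⟩ := Submodule.mem_inf.mp hv
    obtain ⟨hv1, hv3⟩ := Submodule.mem_inf.mp hvM
    obtain ⟨hv2, _⟩ := Submodule.mem_inf.mp hvL
    exact (Submodule.mem_bot _).mpr (hzero v hv1 hv2 hv3)
  have conj4 : (perp n (perp n (Submodule.span (ZMod 2) {x, x'}) ⊓ PiSub n) ⊓ SigmaSub n) ⊔
      (perp n (Submodule.span (ZMod 2) {x, x'}) ⊓ SigmaSub n) = SigmaSub n := by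
    apply le_antisymm (sup_le inf_le_right inf_le_right)
    intro s hs
    have hs' := (mem_SigmaSub n s).mp hs
    set γ := B n s x + (1+b) * B n s x' with hγ
    set δ := (1+a) * B n s x + B n s x' with hδ
    have hlx : B n (s + γ • oddPart n x + δ • oddPart n x') x = 0 := by
      rw [B_add_left, B_add_left, B_smul_left, B_smul_left, hs11, hs21, hγ, hδ]
      exact (by decide : ∀ p q a b : ZMod 2, a + b = 1 →
        p + (p + (1+b)*q) * 1 + ((1+a)*p + q) * (1+b) = 0) _ _ a b hab
    have hlx' : B n (s + γ • oddPart n x + δ • oddPart n x') x' = 0 := by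
      rw [B_add_left, B_add_left, B_smul_left, B_smul_left, hs12, hs22, hγ, hδ]
      exact (by decide : ∀ p q a b : ZMod 2, a + b = 1 →
        q + (p + (1+b)*q) * (1+a) + ((1+a)*p + q) * 1 = 0) _ _ a b hab
    have hlS : (s + γ • oddPart n x + δ • oddPart n x') ∈ SigmaSub n := by
      rw [mem_SigmaSub]
      intro j hj
      simp [hs' j hj, oddPart_even n x j hj, oddPart_even n x' j hj]
    refine Submodule.mem_sup.mpr ⟨γ • oddPart n x + δ • oddPart n x', ?_,
      s + γ • oddPart n x + δ • oddPart n x', ?_, ?_⟩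
    · exact Submodule.add_mem _
        (Submodule.smul_mem _ _ (Submodule.mem_inf.mpr ⟨hxSK, hxSS⟩))
        (Submodule.smul_mem _ _ (Submodule.mem_inf.mpr ⟨hx'SK, hx'SS⟩))
    · exact Submodule.mem_inf.mpr ⟨(mem_perp_span_pair n x x' _).mpr ⟨hlx, hlx'⟩, hlS⟩
    · funext j
      simp only [Pi.add_apply, Pi.smul_apply, smul_eq_mul]
      exact (by decide : ∀ sj A Bb : ZMod 2, A + Bb + (sj + A + Bb) = sj) _ _ _
  exact ⟨conj1, conj2, conj3, conj4⟩
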